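/- arXiv:2405.19172 — 5 statements merged into one kernel-verified Lean document; each statement's English description precedes it below -/
import Mathlib

section
/- For a simple graph G on n ≥ 2 vertices with cc(G) connected components and integer t ≥ 1, the generalized Sierpiński gasket graph S[G,t] has exactly (n^t (cc(G) − 1) + n − cc(G)) / (n − 1) connected components. -/
variable {V : Type*}

/-- Adjacency of the generalized Sierpiński graph `S(G,t)` on words of length `t`:
`u` and `v` are adjacent iff there is an index `i` with `u j = v j` for `j < i`,
`u i` adjacent to `v i` in `G`, and `u j = v i`, `v j = u i` for `j > i`. -/
def sierAdj (G : SimpleGraph V) (t : ℕ) (u v : Fin t → V) : Prop :=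
  ∃ i : Fin t, (∀ j, j < i → u j = v j) ∧ G.Adj (u i) (v i) ∧
    ∀ j, i < j → u j = v i ∧ v j = u i

/-- The generalized Sierpiński graph `S(G,t)`. -/
def sier (G : SimpleGraph V) (t : ℕ) : SimpleGraph (Fin t → V) where
  Adj := sierAdj G t
  symm := by
    constructor
    rintro u v ⟨i, h1, h2, h3⟩
    exact ⟨i, fun j hj => (h1 j hj).symm, h2.symm,
      fun j hj => ⟨(h3 j hj).2, (h3 j hj).1⟩⟩
  loopless := by
    constructor
    rintro u ⟨i, h1, h2, h3⟩
    exact G.irrefl h2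

/-- `linkingAt G t p u v` : `uv` is a linking edge of `S(G,t)` appearing at
(0-indexed) position `p < t - 1`; in the paper's terminology this linking edge is
produced at step `t - p`, and its contraction is a vertex contracted at step `t - p`. -/
def linkingAt (G : SimpleGraph V) (t p : ℕ) (u v : Fin t → V) : Prop :=
  ∃ i : Fin t, i.val = p ∧ i.val + 1 < t ∧ (∀ j, j < i → u j = v j) ∧
    G.Adj (u i) (v i) ∧ ∀ j, i < j → u j = v i ∧ v j = u i

/-- `uv` is a linking edge of `S(G,t)` (an edge appearing at some step `≥ 2`). -/
def linking (G : SimpleGraph V) (t : ℕ) (u v : Fin t → V) : Prop :=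
  ∃ p, linkingAt G t p u v

/-- The equivalence relation on words generated by identifying the two endpoints
of each linking edge. -/
def gasketSetoid (G : SimpleGraph V) (t : ℕ) : Setoid (Fin t → V) :=
  Relation.EqvGen.setoid (linking G t)

/-- The generalized Sierpiński gasket graph `S[G,t]`, obtained from `S(G,t)` by
contracting all linking edges. -/
def gasket (G : SimpleGraph V) (t : ℕ) :
    SimpleGraph (Quotient (gasketSetoid G t)) where
  Adj x y := x ≠ y ∧ ∃ u v, Quotient.mk (gasketSetoid G t) u = x ∧
    Quotient.mk (gasketSetoid G t) v = y ∧ sierAdj G t u v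
  symm := by
    constructor
    rintro x y ⟨hxy, u, v, hu, hv, h⟩
    exact ⟨hxy.symm, v, u, hv, hu, (sier G t).adj_symm h⟩
  loopless := ⟨fun _ h => h.1 rfl⟩

/-- The expanded word `i j j ... j`; for `ij ∈ E(G)` its class in `S[G,t]` is the
contracted vertex `{i,j}_t`. -/
def topWord (t : ℕ) (i j : V) : Fin t → V := fun k => if k.val = 0 then i else j


/-!
Contracting linking edges does not change connected components, so we count the components
of `S(G,t)`. Two words lie in the same component exactly when they have the same canonical
word, obtained by replacing the longest suffix that lies in a single component `D` of `G` by
the constant word at a fixed representative of `D`: the letters of such a suffix can be moved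
freely inside `D` (cross the linking edge `a b … b ∼ b a … a` at the first position and
recurse), while adjacency in `S(G,t)` preserves the component of every letter.
A canonical word of length `t + 1` is a letter `x` followed by a canonical word `w` of length
`t`, except for the `n - c` pairs where `x` is not the representative of its component and
`w` is the constant word at that representative. So the number `a t` of canonical words
satisfies `a (t + 1) = n a t - (n - c)` and `a 0 = 1`.
-/

open SimpleGraph

theorem Nat.card_subtype_add_card_subtype_not {α : Type*} [Finite α] (p : α → Prop) :
    Nat.card {a // p a} + Nat.card {a // ¬ p a} = Nat.card α := by
  classical
  rw [← Nat.card_sum, Nat.card_congr (Equiv.sumCompl p)]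

@[simp]
theorem SimpleGraph.ConnectedComponent.connectedComponentMk_out {α : Type*} {H : SimpleGraph α}
    (D : H.ConnectedComponent) : H.connectedComponentMk D.out = D :=
  D.out_eq

theorem SimpleGraph.Walk.apply_eq_of_adj {α β : Type*} {H : SimpleGraph α} {f : α → β}
    (hf : ∀ u v, H.Adj u v → f u = f v) {u v : α} (p : H.Walk u v) : f u = f v := by
  induction p with
  | nil => rfl
  | cons h _ ih => exact (hf _ _ h).trans ih

noncomputable def SimpleGraph.connectedComponentEquivOfQuotient {α : Type*} {H : SimpleGraph α}
    {s : Setoid α} {H' : SimpleGraph (Quotient s)} (hs : s ≤ H.reachableSetoid)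
    (hadj : ∀ x y, H'.Adj x y ↔
      x ≠ y ∧ ∃ u v, ⟦u⟧ = x ∧ ⟦v⟧ = y ∧ H.Adj u v) :
    H'.ConnectedComponent ≃ H.ConnectedComponent where
  toFun := ConnectedComponent.lift
    (Quotient.lift H.connectedComponentMk fun _ _ h => ConnectedComponent.sound (hs h))
    fun _ _ p _ => p.apply_eq_of_adj fun x y h => by
      obtain ⟨-, u, v, rfl, rfl, huv⟩ := (hadj x y).1 h
      exact ConnectedComponent.sound huv.reachable
  invFun := ConnectedComponent.lift (fun u => H'.connectedComponentMk ⟦u⟧)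
    fun _ _ p _ => p.apply_eq_of_adj (f := fun u => H'.connectedComponentMk ⟦u⟧) fun u v h => by
      by_cases huv : (⟦u⟧ : Quotient s) = ⟦v⟧
      · rw [huv]
      · exact ConnectedComponent.sound ((hadj _ _).2 ⟨huv, u, v, rfl, rfl, h⟩).reachable
  left_inv := ConnectedComponent.ind fun x => Quotient.inductionOn x fun _ => rfl
  right_inv := ConnectedComponent.ind fun _ => rfl

section Sierpinski

variable {G : SimpleGraph V}

theorem sierAdj_succ_iff {t : ℕ} {u v : Fin (t + 1) → V} :
    sierAdj G (t + 1) u v ↔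
      (u 0 = v 0 ∧ sierAdj G t (Fin.tail u) (Fin.tail v)) ∨
        (G.Adj (u 0) (v 0) ∧ ∀ j : Fin t, u j.succ = v 0 ∧ v j.succ = u 0) := by
  constructor
  · rintro ⟨i, h1, h2, h3⟩
    cases i using Fin.cases with
    | zero => exact .inr ⟨h2, fun j => h3 j.succ j.succ_pos⟩
    | succ i =>
      exact .inl ⟨h1 0 i.succ_pos, i, fun j hj => h1 j.succ (Fin.succ_lt_succ_iff.2 hj), h2,
        fun j hj => h3 j.succ (Fin.succ_lt_succ_iff.2 hj)⟩
  · rintro (⟨h0, i, h1, h2, h3⟩ | ⟨h2, h3⟩)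
    · refine ⟨i.succ, fun j hj => ?_, h2, fun j hj => ?_⟩
      · cases j using Fin.cases with
        | zero => exact h0
        | succ j => exact h1 j (Fin.succ_lt_succ_iff.1 hj)
      · cases j using Fin.cases with
        | zero => exact absurd hj (Fin.not_lt_zero _)
        | succ j => exact h3 j (Fin.succ_lt_succ_iff.1 hj)
    · refine ⟨0, fun j hj => absurd hj (Fin.not_lt_zero _), h2, fun j hj => ?_⟩
      cases j using Fin.cases with
      | zero => exact absurd hj (lt_irrefl _)
      | succ j => exact h3 j

theorem connectedComponentMk_eq_of_sierAdj {t : ℕ} {u v : Fin t → V} (h : sierAdj G t u v)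
    (j : Fin t) : G.connectedComponentMk (u j) = G.connectedComponentMk (v j) := by
  obtain ⟨i, h1, h2, h3⟩ := h
  have hi := ConnectedComponent.connectedComponentMk_eq_of_adj h2
  rcases lt_trichotomy j i with hj | rfl | hj
  · rw [h1 j hj]
  · exact hi
  · rw [(h3 j hj).1, (h3 j hj).2, hi]

variable (G) in
def sierConsHom {t : ℕ} (x : V) : sier G t →g sier G (t + 1) where
  toFun w := Fin.cons x w
  map_rel' h := sierAdj_succ_iff.2 (.inl ⟨by simp, by simp only [Fin.tail_cons]; exact h⟩)

theorem sier_adj_cons_const {t : ℕ} {a b : V} (h : G.Adj a b) :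
    (sier G (t + 1)).Adj (Fin.cons a fun _ => b) (Fin.cons b fun _ => a) :=
  sierAdj_succ_iff.2 (.inr ⟨by simpa using h, fun _ => by simp⟩)

theorem sier_reachable_of_forall_connectedComponentMk_eq {D : G.ConnectedComponent} :
    ∀ {t : ℕ} {u v : Fin t → V}, (∀ j, G.connectedComponentMk (u j) = D) →
      (∀ j, G.connectedComponentMk (v j) = D) → (sier G t).Reachable u v
  | 0, u, v, _, _ => by rw [Subsingleton.elim u v]
  | t + 1, u, v, hu, hv => by
    have ih {w w' : Fin t → V} := @sier_reachable_of_forall_connectedComponentMk_eq D t w w'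
    have key {a b : V} (p : G.Walk a b) (ha : G.connectedComponentMk a = D) {w w' : Fin t → V}
        (hw : ∀ j, G.connectedComponentMk (w j) = D)
        (hw' : ∀ j, G.connectedComponentMk (w' j) = D) :
        (sier G (t + 1)).Reachable (Fin.cons a w) (Fin.cons b w') := by
      induction p generalizing w with
      | @nil a => exact (ih hw hw').map (sierConsHom G a)
      | @cons a a' _ h _ ihp =>
        have ha' := (ConnectedComponent.connectedComponentMk_eq_of_adj h).symm.trans ha
        exact ((ih hw fun _ => ha').map (sierConsHom G a)).trans
          ((sier_adj_cons_const h).reachable.trans (ihp ha' fun _ => ha))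
    obtain ⟨p⟩ := ConnectedComponent.exact ((hu 0).trans (hv 0).symm)
    rw [← Fin.cons_self_tail u, ← Fin.cons_self_tail v]
    exact key p (hu 0) (fun j => hu j.succ) (fun j => hv j.succ)

variable (G) in
open Classical in
/-- The longest suffix of `w` lying in one component of `G` is replaced by the constant word
at the representative of that component. -/
noncomputable def canonWord : (t : ℕ) → (Fin t → V) → Fin t → V
  | 0, w => w
  | t + 1, w =>
    if ∀ j, G.connectedComponentMk (w j) = G.connectedComponentMk (w 0) then
      fun _ => (G.connectedComponentMk (w 0)).out
    else Fin.cons (w 0) (canonWord t (Fin.tail w))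

theorem connectedComponentMk_canonWord :
    ∀ {t : ℕ} (w : Fin t → V) (j : Fin t),
      G.connectedComponentMk (canonWord G t w j) = G.connectedComponentMk (w j)
  | 0, _, j => j.elim0
  | t + 1, w, j => by
    rw [canonWord]
    split_ifs with h
    · exact ((G.connectedComponentMk (w 0)).connectedComponentMk_out).trans (h j).symm
    · cases j using Fin.cases with
      | zero => rfl
      | succ j => exact connectedComponentMk_canonWord (Fin.tail w) j

theorem canonWord_eq_const {D : G.ConnectedComponent} :
    ∀ {t : ℕ} {w : Fin t → V}, (∀ j, G.connectedComponentMk (w j) = D) →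
      canonWord G t w = fun _ => D.out
  | 0, _, _ => funext fun j => j.elim0
  | t + 1, w, hw => by
    rw [canonWord, if_pos fun j => (hw j).trans (hw 0).symm, hw 0]

theorem canonWord_const_out (t : ℕ) (D : G.ConnectedComponent) :
    canonWord G t (fun _ => D.out) = fun _ => D.out :=
  canonWord_eq_const fun _ => D.connectedComponentMk_out

theorem canonWord_canonWord :
    ∀ {t : ℕ} (w : Fin t → V), canonWord G t (canonWord G t w) = canonWord G t w
  | 0, _ => rfl
  | t + 1, w => by
    by_cases h : ∀ j, G.connectedComponentMk (w j) = G.connectedComponentMk (w 0)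
    · rw [canonWord_eq_const h, canonWord_const_out]
    · have hw : canonWord G (t + 1) w = Fin.cons (w 0) (canonWord G t (Fin.tail w)) := by
        rw [canonWord, if_neg h]
      have h' : ¬ ∀ j, G.connectedComponentMk (canonWord G (t + 1) w j) =
          G.connectedComponentMk (canonWord G (t + 1) w 0) := by
        simpa only [connectedComponentMk_canonWord] using h
      rw [hw] at h' ⊢
      rw [canonWord, if_neg h', Fin.cons_zero, Fin.tail_cons, canonWord_canonWord]

theorem canonWord_eq_of_sierAdj :
    ∀ {t : ℕ} {u v : Fin t → V}, sierAdj G t u v → canonWord G t u = canonWord G t v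
  | 0, u, v, _ => Subsingleton.elim _ _
  | t + 1, u, v, huv => by
    have hcomp := connectedComponentMk_eq_of_sierAdj huv
    rcases sierAdj_succ_iff.1 huv with ⟨h0, htail⟩ | ⟨h0, hlink⟩
    · rw [canonWord, canonWord, h0, canonWord_eq_of_sierAdj htail]
      congr 1
      simp only [hcomp]
    · have hu : ∀ j, G.connectedComponentMk (u j) = G.connectedComponentMk (u 0) := by
        refine Fin.cases rfl fun j => ?_
        rw [(hlink j).1, ConnectedComponent.connectedComponentMk_eq_of_adj h0]
      rw [canonWord_eq_const hu, canonWord_eq_const fun j => (hcomp j).symm.trans (hu j)]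

theorem sier_reachable_canonWord :
    ∀ {t : ℕ} (w : Fin t → V), (sier G t).Reachable w (canonWord G t w)
  | 0, _ => .rfl
  | t + 1, w => by
    rw [canonWord]
    split_ifs with h
    · exact sier_reachable_of_forall_connectedComponentMk_eq h fun _ =>
        ConnectedComponent.connectedComponentMk_out _
    · conv_lhs => rw [← Fin.cons_self_tail w]
      exact (sier_reachable_canonWord (Fin.tail w)).map (sierConsHom G (w 0))

theorem sier_reachable_iff_canonWord_eq {t : ℕ} {u v : Fin t → V} :
    (sier G t).Reachable u v ↔ canonWord G t u = canonWord G t v :=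
  ⟨fun ⟨p⟩ => p.apply_eq_of_adj fun _ _ => canonWord_eq_of_sierAdj, fun h =>
    (sier_reachable_canonWord u).trans (h ▸ (sier_reachable_canonWord v).symm)⟩

variable (G) in
abbrev CanonWords (t : ℕ) : Type _ := {w : Fin t → V // canonWord G t w = w}

variable (G) in
noncomputable def sierComponentEquiv (t : ℕ) :
    (sier G t).ConnectedComponent ≃ CanonWords G t where
  toFun := ConnectedComponent.lift (fun u => ⟨canonWord G t u, canonWord_canonWord u⟩)
    fun _ _ p _ => Subtype.ext (sier_reachable_iff_canonWord_eq.1 p.reachable)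
  invFun w := (sier G t).connectedComponentMk w
  left_inv := ConnectedComponent.ind fun u =>
    ConnectedComponent.sound (sier_reachable_iff_canonWord_eq.2 (canonWord_canonWord u))
  right_inv w := Subtype.ext w.2

end Sierpinski

noncomputable def gasketComponentEquiv (G : SimpleGraph V) (t : ℕ) :
    (gasket G t).ConnectedComponent ≃ (sier G t).ConnectedComponent :=
  connectedComponentEquivOfQuotient
    (Setoid.eqvGen_le fun _ _ ⟨_, i, _, _, h⟩ => Adj.reachable (G := sier G t) ⟨i, h⟩)
    fun _ _ => Iff.rfl

section Counting

variable {G : SimpleGraph V}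

variable (G) in
def IsExceptionalPair {t : ℕ} (x : V) (w : Fin t → V) : Prop :=
  w = (fun _ => (G.connectedComponentMk x).out) ∧ x ≠ (G.connectedComponentMk x).out

theorem canonWord_cons_eq_self_iff {t : ℕ} (x : V) (w : Fin t → V) :
    canonWord G (t + 1) (Fin.cons x w) = Fin.cons x w ↔
      canonWord G t w = w ∧ ¬ IsExceptionalPair G x w := by
  rw [canonWord]
  simp only [Fin.cons_zero, Fin.tail_cons, IsExceptionalPair]
  split_ifs with h
  · have hw : ∀ j, G.connectedComponentMk (w j) = G.connectedComponentMk x := fun j => by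
      simpa using h j.succ
    rw [canonWord_eq_const hw]
    constructor
    · intro e
      have hx : (G.connectedComponentMk x).out = x := by simpa using congrFun e 0
      exact ⟨funext fun j => by simpa using congrFun e j.succ, fun hb => hb.2 hx.symm⟩
    · rintro ⟨rfl, hb⟩
      have hx : x = (G.connectedComponentMk x).out := not_not.1 fun hx => hb ⟨rfl, hx⟩
      funext j
      cases j using Fin.cases <;> simp [← hx]
  · rw [Fin.cons_inj]
    refine ⟨fun hc => ⟨hc.2, fun hb => h (Fin.cases rfl fun j => ?_)⟩,
      fun hc => ⟨rfl, hc.1⟩⟩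
    simp [hb.1]

variable (G) in
noncomputable def canonWordSuccEquiv (t : ℕ) :
    CanonWords G (t + 1) ≃ {p : V × CanonWords G t // ¬ IsExceptionalPair G p.1 p.2.1} where
  toFun u :=
    have h := (canonWord_cons_eq_self_iff (u.1 0) (Fin.tail u.1)).1
      (by rw [Fin.cons_self_tail]; exact u.2)
    ⟨(u.1 0, ⟨Fin.tail u.1, h.1⟩), h.2⟩
  invFun p := ⟨Fin.cons p.1.1 p.1.2.1, (canonWord_cons_eq_self_iff _ _).2 ⟨p.1.2.2, p.2⟩⟩
  left_inv u := Subtype.ext (Fin.cons_self_tail u.1)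
  right_inv _ := rfl

variable (G) in
noncomputable def exceptionalPairEquiv (t : ℕ) :
    {p : V × CanonWords G t // IsExceptionalPair G p.1 p.2.1} ≃
      {x : V // x ≠ (G.connectedComponentMk x).out} where
  toFun p := ⟨p.1.1, p.2.2⟩
  invFun x :=
    ⟨(x, ⟨fun _ => (G.connectedComponentMk x).out, canonWord_const_out t _⟩), rfl, x.2⟩
  left_inv p := Subtype.ext (Prod.ext rfl (Subtype.ext p.2.1.symm))
  right_inv _ := rfl

variable (G) in
noncomputable def representativeEquiv :
    {x : V // x = (G.connectedComponentMk x).out} ≃ G.ConnectedComponent where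
  toFun x := G.connectedComponentMk x
  invFun D := ⟨D.out, by rw [D.connectedComponentMk_out]⟩
  left_inv x := Subtype.ext x.2.symm
  right_inv := ConnectedComponent.connectedComponentMk_out

theorem card_canonWords_zero : Nat.card (CanonWords G 0) = 1 :=
  Nat.card_eq_one_iff_unique.2 ⟨inferInstance, ⟨⟨Fin.elim0, rfl⟩⟩⟩

theorem card_canonWords_succ_add [Finite V] (t : ℕ) :
    Nat.card (CanonWords G (t + 1)) + Nat.card {x : V // x ≠ (G.connectedComponentMk x).out} =
      Nat.card V * Nat.card (CanonWords G t) := by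
  rw [Nat.card_congr (canonWordSuccEquiv G t), ← Nat.card_congr (exceptionalPairEquiv G t),
    add_comm, Nat.card_subtype_add_card_subtype_not, Nat.card_prod]

theorem card_nonrepresentative_add [Finite V] :
    Nat.card {x : V // x ≠ (G.connectedComponentMk x).out} + Nat.card G.ConnectedComponent =
      Nat.card V := by
  rw [← Nat.card_congr (representativeEquiv G), add_comm, Nat.card_subtype_add_card_subtype_not]

end Counting

theorem sub_one_mul_eq_of_add_eq_mul {a : ℕ → ℕ} {n b c : ℕ} (h0 : a 0 = 1)
    (hs : ∀ t, a (t + 1) + b = n * a t) (hbc : b + c = n) (t : ℕ) :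
    ((n : ℤ) - 1) * a t = n ^ t * (c - 1) + n - c := by
  have hbc' : (b : ℤ) + c = n := mod_cast hbc
  induction t with
  | zero => rw [h0]; push_cast; ring
  | succ t ih =>
    have hs' : (a (t + 1) : ℤ) + b = n * a t := mod_cast hs t
    linear_combination (n : ℤ) * ih + ((n : ℤ) - 1) * hs' + (1 - (n : ℤ)) * hbc'

theorem stmt_2_general [Fintype V] (G : SimpleGraph V) (n c t : ℕ)
    (hn : n = Fintype.card V) (h2 : 2 ≤ n)
    (hc : c = Nat.card G.ConnectedComponent) :
    Nat.card (gasket G t).ConnectedComponent = (n ^ t * (c - 1) + n - c) / (n - 1) := by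
  rw [← Nat.card_eq_fintype_card] at hn
  have hbc := hn ▸ hc ▸ card_nonrepresentative_add (G := G)
  have hcount := sub_one_mul_eq_of_add_eq_mul (a := fun t => Nat.card (CanonWords G t))
    card_canonWords_zero (fun t => hn ▸ card_canonWords_succ_add t) hbc t
  have hc1 : 1 ≤ c := by
    have : Nonempty V := Nat.card_pos_iff.1 (by omega) |>.1
    exact hc ▸ Nat.card_pos
  rw [Nat.card_congr ((gasketComponentEquiv G t).trans (sierComponentEquiv G t))]
  refine (Nat.div_eq_of_eq_mul_left (by omega) ?_).symm
  have hle : c ≤ n ^ t * (c - 1) + n := by omega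
  zify [hc1, hle, (by omega : 1 ≤ n)]
  linear_combination -hcount

/-- `S[G,t]` has `(n^t(cc(G)−1) + n − cc(G))/(n−1)` connected components. -/
theorem stmt_2 [Fintype V] (G : SimpleGraph V) (n c t : ℕ)
    (hn : n = Fintype.card V) (h2 : 2 ≤ n) (ht : 1 ≤ t)
    (hc : c = Nat.card G.ConnectedComponent) :
    Nat.card (gasket G t).ConnectedComponent = (n ^ t * (c - 1) + n - c) / (n - 1) :=
  stmt_2_general G n c t hn h2 hc
end

section
/- Two contracted vertices {i,j}_2 and {l,k}_2 are adjacent in S[G,2] if and only if |{i,j} ∩ {l,k}| = 1 and the three vertices in {i,j,k,l} induce a triangle in G. -/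
variable {V : Type*}

/-!
A vertex of `S(G,2)` is a word `ab`, and in `S[G,2]` the class of `ab` with `ab ∈ E(G)` is
`{ab, ba}`, i.e. the unordered pair `s(a, b)`. An edge of `S(G,2)` is either a linking edge
`ab — ba`, which is contracted, or an edge `ab — ac` with `bc ∈ E(G)`. So `{i,j}_2` and `{l,k}_2`
are adjacent exactly when the two pairs can be written `s(a, b)`, `s(a, c)` with `bc ∈ E(G)`,
which is the triangle `abc` with the two pairs sharing only `a`.
-/

section GasketTwo

variable {G : SimpleGraph V} {u v : Fin 2 → V} {a b i j l k : V}

theorem linking_two_iff :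
    linking G 2 u v ↔ G.Adj (u 0) (v 0) ∧ u 1 = v 0 ∧ v 1 = u 0 := by
  constructor
  · rintro ⟨_, i, -, hi, -, hadj, hafter⟩
    obtain rfl : i = 0 := by omega
    exact ⟨hadj, hafter 1 (by decide)⟩
  · rintro ⟨hadj, h₁, h₂⟩
    refine ⟨0, 0, rfl, by decide, fun j hj => absurd hj (by omega), hadj, fun j hj => ?_⟩
    obtain rfl : j = 1 := by omega
    exact ⟨h₁, h₂⟩

theorem sierAdj_two_iff :
    sierAdj G 2 u v ↔ linking G 2 u v ∨ (u 0 = v 0 ∧ G.Adj (u 1) (v 1)) := by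
  rw [linking_two_iff]
  constructor
  · rintro ⟨i, hbefore, hadj, hafter⟩
    obtain rfl | rfl : i = 0 ∨ i = 1 := by omega
    · exact Or.inl ⟨hadj, hafter 1 (by decide)⟩
    · exact Or.inr ⟨hbefore 0 (by decide), hadj⟩
  · rintro (⟨hadj, h₁, h₂⟩ | ⟨h₀, hadj⟩)
    · refine ⟨0, fun j hj => absurd hj (by omega), hadj, fun j hj => ?_⟩
      obtain rfl : j = 1 := by omega
      exact ⟨h₁, h₂⟩
    · refine ⟨1, fun j hj => ?_, hadj, fun j hj => absurd hj (by omega)⟩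
      obtain rfl : j = 0 := by omega
      exact h₀

theorem equivalence_eq_or_linking_two :
    Equivalence fun u v : Fin 2 → V => u = v ∨ linking G 2 u v where
  refl _ := Or.inl rfl
  symm := by
    rintro u v (rfl | h)
    · exact Or.inl rfl
    · rw [linking_two_iff] at h ⊢
      exact Or.inr ⟨h.1.symm, h.2.2, h.2.1⟩
  trans := by
    rintro u v w (rfl | huv) (rfl | hvw)
    · exact Or.inl rfl
    · exact Or.inr hvw
    · exact Or.inr huv
    · rw [linking_two_iff] at huv hvw
      exact Or.inl (funext (Fin.forall_fin_two.2
        ⟨huv.2.2.symm.trans hvw.2.1, huv.2.1.trans hvw.2.2.symm⟩))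

theorem mk_eq_mk_two_iff :
    Quotient.mk (gasketSetoid G 2) u = Quotient.mk (gasketSetoid G 2) v ↔
      u = v ∨ linking G 2 u v := by
  rw [Quotient.eq]
  refine ⟨fun h => equivalence_eq_or_linking_two.eqvGen_iff.1 (h.mono fun _ _ => Or.inr), ?_⟩
  rintro (rfl | h)
  exacts [Relation.EqvGen.refl u, Relation.EqvGen.rel u v h]

theorem mk_eq_mk_pair_iff (hab : G.Adj a b) :
    Quotient.mk (gasketSetoid G 2) u = Quotient.mk (gasketSetoid G 2) ![a, b] ↔
      s(u 0, u 1) = s(a, b) := by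
  rw [mk_eq_mk_two_iff, linking_two_iff, funext_iff, Fin.forall_fin_two, Sym2.eq_iff]
  simp only [Matrix.cons_val_zero, Matrix.cons_val_one]
  constructor
  · rintro (h | ⟨-, h₁, h₀⟩)
    exacts [Or.inl h, Or.inr ⟨h₀.symm, h₁⟩]
  · rintro (h | ⟨rfl, rfl⟩)
    exacts [Or.inl h, Or.inr ⟨hab.symm, rfl, rfl⟩]

theorem gasket_two_adj_iff (hij : G.Adj i j) (hlk : G.Adj l k) :
    (gasket G 2).Adj (Quotient.mk (gasketSetoid G 2) ![i, j])
        (Quotient.mk (gasketSetoid G 2) ![l, k]) ↔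
      ∃ a b c, s(a, b) = s(i, j) ∧ s(a, c) = s(l, k) ∧ G.Adj b c := by
  constructor
  · rintro ⟨hne, u, v, hu, hv, huv⟩
    rcases sierAdj_two_iff.1 huv with hlink | ⟨h₀, hadj⟩
    · exact absurd (hu ▸ hv ▸ mk_eq_mk_two_iff.2 (Or.inr hlink)) hne
    · exact ⟨u 0, u 1, v 1, (mk_eq_mk_pair_iff hij).1 hu, h₀ ▸ (mk_eq_mk_pair_iff hlk).1 hv, hadj⟩
  · rintro ⟨a, b, c, hab, hac, hbc⟩
    refine ⟨?_, ![a, b], ![a, c], (mk_eq_mk_pair_iff hij).2 hab, (mk_eq_mk_pair_iff hlk).2 hac,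
      sierAdj_two_iff.2 (Or.inr ⟨rfl, hbc⟩)⟩
    rw [Ne, mk_eq_mk_pair_iff hlk]
    simpa only [Matrix.cons_val_zero, Matrix.cons_val_one, ← hab, ← hac, Sym2.congr_right]
      using hbc.ne

end GasketTwo

section Triangle

variable {G : SimpleGraph V} {a b c d i j l k : V}

theorem adj_of_sym2_eq (h : s(a, b) = s(c, d)) (hcd : G.Adj c d) : G.Adj a b :=
  G.mem_edgeSet.1 (h ▸ G.mem_edgeSet.2 hcd)

variable [DecidableEq V]

theorem pair_eq_pair_of_sym2_eq (h : s(a, b) = s(c, d)) : ({a, b} : Finset V) = {c, d} := by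
  simpa only [Sym2.toFinset_mk_eq] using congrArg Sym2.toFinset h

theorem card_inter_eq_one_and_isClique_union_iff (hab : G.Adj a b) (hac : G.Adj a c) :
    (({a, b} ∩ {a, c} : Finset V).card = 1 ∧
      G.IsClique (({a, b} ∪ {a, c} : Finset V) : Set V)) ↔ G.Adj b c := by
  constructor
  · rintro ⟨hcard, hclique⟩
    have hbc : b ≠ c := by
      rintro rfl
      rw [Finset.inter_self, Finset.card_pair hab.ne] at hcard
      exact absurd hcard (by decide)
    exact hclique (by simp) (by simp) hbc
  · intro hbc
    have hinter : ({a, b} ∩ {a, c} : Finset V) = {a} := by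
      ext x
      have := hbc.ne
      simp only [Finset.mem_inter, Finset.mem_insert, Finset.mem_singleton]
      grind
    refine ⟨by rw [hinter, Finset.card_singleton], ?_⟩
    rw [Finset.insert_union, Finset.singleton_union]
    simp [hac, hbc, hab.symm]

theorem exists_adj_iff_card_inter_eq_one_and_isClique (hij : G.Adj i j) (hlk : G.Adj l k) :
    (∃ a b c, s(a, b) = s(i, j) ∧ s(a, c) = s(l, k) ∧ G.Adj b c) ↔
      ({i, j} ∩ {l, k} : Finset V).card = 1 ∧
        G.IsClique (({i, j} ∪ {l, k} : Finset V) : Set V) := by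
  constructor
  · rintro ⟨a, b, c, hab, hac, hbc⟩
    rw [← pair_eq_pair_of_sym2_eq hab, ← pair_eq_pair_of_sym2_eq hac]
    exact (card_inter_eq_one_and_isClique_union_iff (adj_of_sym2_eq hab hij)
      (adj_of_sym2_eq hac hlk)).2 hbc
  · intro h
    obtain ⟨a, ha⟩ := Finset.card_eq_one.1 h.1
    obtain ⟨haij, halk⟩ := Finset.mem_inter.1 (ha ▸ Finset.mem_singleton_self a)
    obtain ⟨b, hab⟩ := Sym2.mem_iff_exists.1 (Sym2.mem_iff.2 (by simpa using haij))
    obtain ⟨c, hac⟩ := Sym2.mem_iff_exists.1 (Sym2.mem_iff.2 (by simpa using halk))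
    refine ⟨a, b, c, hab.symm, hac.symm, (card_inter_eq_one_and_isClique_union_iff
      (adj_of_sym2_eq hab.symm hij) (adj_of_sym2_eq hac.symm hlk)).1 ?_⟩
    rwa [← pair_eq_pair_of_sym2_eq hab, ← pair_eq_pair_of_sym2_eq hac]

end Triangle

/-- two contracted vertices `{i,j}_2` and `{l,k}_2` are adjacent in
`S[G,2]` iff `|{i,j} ∩ {l,k}| = 1` and the vertices `{i,j,l,k}` induce a triangle in `G`. -/
theorem stmt_5 [DecidableEq V] (G : SimpleGraph V) (i j l k : V)
    (hij : G.Adj i j) (hlk : G.Adj l k) :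
    (gasket G 2).Adj (Quotient.mk (gasketSetoid G 2) ![i, j])
        (Quotient.mk (gasketSetoid G 2) ![l, k]) ↔
      (({i, j} : Finset V) ∩ {l, k}).card = 1 ∧
      ∀ a ∈ ({i, j, l, k} : Finset V), ∀ b ∈ ({i, j, l, k} : Finset V),
        a ≠ b → G.Adj a b := by
  have hunion : ({i, j, l, k} : Finset V) = {i, j} ∪ {l, k} := by
    rw [Finset.insert_union, Finset.singleton_union]
  rw [gasket_two_adj_iff hij hlk, exists_adj_iff_card_inter_eq_one_and_isClique hij hlk, hunion]
  rfl
end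

section
/- If C is a clique of S[G,t] with |C| ≥ 4, then C is entirely contained in one of the copies S_i[G,t] of S[G,t−1], for some vertex i of G. -/
variable {V : Type*}

/-!
A vertex of `S[G,t]` has one or two representative words, two exactly when it is a contracted
vertex, and then the two words determine each other and have different prefixes of length
`t - 1`; moreover a contracted vertex is determined by this pair of prefixes. Since every edge
of `S[G,t]` comes from an edge of `S(G,t)` at the last letter, adjacent vertices share such a
prefix. So the prefix sets of the vertices of a clique are pairwise intersecting sets of size
at most two, and with four or more of them they have a common element, whose first letter
names the copy containing the clique.
-/

section PairwiseIntersecting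

variable {α β : Type*} {f : α → Set β} {s : Finset α}

theorem mem_or_mem_of_inter_nonempty {x y : α}
    (htwo : ∀ a ∈ f x, ∀ b ∈ f x, ∀ c ∈ f x, a = b ∨ a = c ∨ b = c)
    {a b : β} (hab : a ≠ b) (ha : a ∈ f x) (hb : b ∈ f x) (hxy : (f x ∩ f y).Nonempty) :
    a ∈ f y ∨ b ∈ f y := by
  obtain ⟨c, hcx, hcy⟩ := hxy
  rcases htwo c hcx a ha b hb with rfl | rfl | rfl
  · exact Or.inl hcy
  · exact Or.inr hcy
  · exact absurd rfl hab

/-- Pairwise intersecting sets of size at most two, no two-element set occurring twice,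
form a star as soon as there are four of them: a fourth set cannot meet all three sides of a
triangle `{a, b}, {a, c}, {b, c}` without repeating one of them. -/
theorem exists_forall_mem_of_pairwise_inter_nonempty (hs : 4 ≤ s.card)
    (hmeet : (s : Set α).Pairwise fun x y => (f x ∩ f y).Nonempty)
    (htwo : ∀ x ∈ s, ∀ a ∈ f x, ∀ b ∈ f x, ∀ c ∈ f x, a = b ∨ a = c ∨ b = c)
    (hdet : ∀ x ∈ s, ∀ y ∈ s, ∀ a b, a ≠ b → a ∈ f x → b ∈ f x → a ∈ f y → b ∈ f y → x = y) :
    ∃ b, ∀ x ∈ s, b ∈ f x := by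
  classical
  obtain ⟨x₁, hx₁, x₂, hx₂, h₁₂⟩ := Finset.one_lt_card.mp (by omega : 1 < s.card)
  obtain ⟨a, ha₁, ha₂⟩ := hmeet hx₁ hx₂ h₁₂
  have star_of_subsingleton {x : α} (hx : x ∈ s) (hax : a ∈ f x) (hxa : ∀ b ∈ f x, b = a) :
      ∀ y ∈ s, a ∈ f y := by
    intro y hy
    rcases eq_or_ne y x with rfl | hyx
    · exact hax
    · obtain ⟨b, hbx, hby⟩ := hmeet hx hy hyx.symm
      exact hxa b hbx ▸ hby
  by_cases h₁ : ∃ b ∈ f x₁, b ≠ a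
  swap
  · push Not at h₁
    exact ⟨a, star_of_subsingleton hx₁ ha₁ h₁⟩
  by_cases h₂ : ∃ c ∈ f x₂, c ≠ a
  swap
  · push Not at h₂
    exact ⟨a, star_of_subsingleton hx₂ ha₂ h₂⟩
  obtain ⟨b, hb₁, hba⟩ := h₁
  obtain ⟨c, hc₂, hca⟩ := h₂
  have hbc : b ≠ c := fun hbc =>
    h₁₂ (hdet x₁ hx₁ x₂ hx₂ a b hba.symm ha₁ hb₁ ha₂ (hbc ▸ hc₂))
  refine ⟨a, fun y hy => by_contra fun hay => ?_⟩
  have hy₁ : y ≠ x₁ := by rintro rfl; exact hay ha₁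
  have hy₂ : y ≠ x₂ := by rintro rfl; exact hay ha₂
  have hby : b ∈ f y := ((mem_or_mem_of_inter_nonempty (htwo x₁ hx₁) hba.symm ha₁ hb₁
    (hmeet hx₁ hy hy₁.symm)).resolve_left hay)
  have hcy : c ∈ f y := ((mem_or_mem_of_inter_nonempty (htwo x₂ hx₂) hca.symm ha₂ hc₂
    (hmeet hx₂ hy hy₂.symm)).resolve_left hay)
  obtain ⟨z, hz, hz₁₂y⟩ : ∃ z ∈ s, z ∉ ({x₁, x₂, y} : Finset α) :=
    Finset.exists_mem_notMem_of_card_lt_card (Finset.card_le_three.trans_lt (by omega))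
  simp only [Finset.mem_insert, Finset.mem_singleton, not_or] at hz₁₂y
  obtain ⟨hz₁, hz₂, hzy⟩ := hz₁₂y
  have hab_z := mem_or_mem_of_inter_nonempty (htwo x₁ hx₁) hba.symm ha₁ hb₁
    (hmeet hx₁ hz (Ne.symm hz₁))
  have hac_z := mem_or_mem_of_inter_nonempty (htwo x₂ hx₂) hca.symm ha₂ hc₂
    (hmeet hx₂ hz (Ne.symm hz₂))
  have hbc_z := mem_or_mem_of_inter_nonempty (htwo y hy) hbc hby hcy (hmeet hy hz (Ne.symm hzy))
  rcases (by tauto : (a ∈ f z ∧ b ∈ f z) ∨ (a ∈ f z ∧ c ∈ f z) ∨ (b ∈ f z ∧ c ∈ f z)) with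
    ⟨h, h'⟩ | ⟨h, h'⟩ | ⟨h, h'⟩
  · exact hz₁ (hdet z hz x₁ hx₁ a b hba.symm h h' ha₁ hb₁)
  · exact hz₂ (hdet z hz x₂ hx₂ a c hca.symm h h' ha₂ hc₂)
  · exact hzy (hdet z hz y hy b c hbc h h' hby hcy)

end PairwiseIntersecting

section Gasket

variable {G : SimpleGraph V} {t : ℕ}

local notation "⟦" u "⟧ₛ" => Quotient.mk (gasketSetoid G t) u

theorem linking_symm {u v : Fin t → V} (h : linking G t u v) : linking G t v u := by
  obtain ⟨p, i, hip, hi, hb, ha, hl⟩ := h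
  exact ⟨p, i, hip, hi, fun j hj => (hb j hj).symm, ha.symm,
    fun j hj => ⟨(hl j hj).2, (hl j hj).1⟩⟩

theorem linking_unique {u v w : Fin t → V} (hv : linking G t u v) (hw : linking G t u w) :
    v = w := by
  obtain ⟨_, i, -, hi, hb, ha, hl⟩ := hv
  obtain ⟨_, i', -, hi', hb', ha', hl'⟩ := hw
  wlog hii : i ≤ i' generalizing i i' v w
  · exact (this i' hi' hb' ha' hl' i hi hb ha hl (le_of_not_ge hii)).symm
  have hnext : i' < ⟨i' + 1, hi'⟩ := Fin.lt_def.mpr (Nat.lt_succ_self _)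
  obtain rfl : i = i' := by
    refine hii.antisymm (not_lt.mp fun hlt => G.irrefl (v := v i) ?_)
    -- after position `i` every letter of `u` is `v i`, yet `u` changes right after `i'`
    simpa only [(hl i' hlt).1, ← (hl' _ hnext).1, (hl _ (hlt.trans hnext)).1] using ha'
  funext j
  rcases lt_trichotomy j i with hj | rfl | hj
  · exact (hb j hj).symm.trans (hb' j hj)
  · exact (hl _ hnext).1.symm.trans (hl' _ hnext).1
  · exact (hl j hj).2.trans (hl' j hj).2.symm

theorem mk_eq_mk_iff {u v : Fin t → V} : ⟦u⟧ₛ = ⟦v⟧ₛ ↔ u = v ∨ linking G t u v := by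
  refine ⟨fun h => ?_, ?_⟩
  · replace h : Relation.EqvGen (linking G t) u v := Quotient.exact h
    induction h with
    | rel a b hab => exact Or.inr hab
    | refl a => exact Or.inl rfl
    | symm a b _ ih => exact ih.imp Eq.symm linking_symm
    | trans a b c _ _ ih₁ ih₂ =>
      rcases ih₁ with rfl | h₁
      · exact ih₂
      rcases ih₂ with rfl | h₂
      · exact Or.inr h₁
      · exact Or.inl (linking_unique (linking_symm h₁) h₂)
  · rintro (rfl | h)
    · rfl
    · exact Quotient.sound (Relation.EqvGen.rel _ _ h)

theorem eq_or_eq_or_eq_of_mk_eq {u v w : Fin t → V} (huv : ⟦u⟧ₛ = ⟦v⟧ₛ) (huw : ⟦u⟧ₛ = ⟦w⟧ₛ) :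
    u = v ∨ u = w ∨ v = w := by
  rcases mk_eq_mk_iff.mp huv with h | hv
  · exact Or.inl h
  rcases mk_eq_mk_iff.mp huw with h | hw
  · exact Or.inr (Or.inl h)
  · exact Or.inr (Or.inr (linking_unique hv hw))

theorem apply_eq_of_take_eq {u v : Fin t → V}
    (h : Fin.take _ (Nat.sub_le t 1) u = Fin.take _ (Nat.sub_le t 1) v) {j : Fin t}
    (hj : j.val + 1 < t) : u j = v j :=
  congrFun h ⟨j, by omega⟩

theorem eq_of_linking_of_take_eq {u₁ v₁ u₂ v₂ : Fin t → V}
    (h₁ : linking G t u₁ v₁) (h₂ : linking G t u₂ v₂)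
    (hu : Fin.take _ (Nat.sub_le t 1) u₁ = Fin.take _ (Nat.sub_le t 1) u₂)
    (hv : Fin.take _ (Nat.sub_le t 1) v₁ = Fin.take _ (Nat.sub_le t 1) v₂) : u₁ = u₂ := by
  obtain ⟨_, i, -, hi, hb, ha, hl⟩ := h₁
  obtain ⟨_, i', -, hi', hb', ha', hl'⟩ := h₂
  wlog hii : i ≤ i' generalizing u₁ v₁ u₂ v₂ i i'
  · exact (this hu.symm hv.symm i' hi' hb' ha' hl' i hi hb ha hl (le_of_not_ge hii)).symm
  obtain rfl : i = i' := hii.antisymm <| not_lt.mp fun hlt => ha.ne <|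
    (apply_eq_of_take_eq hu hi).trans ((hb' i hlt).trans (apply_eq_of_take_eq hv hi).symm)
  funext j
  by_cases hj : j.val + 1 < t
  · exact apply_eq_of_take_eq hu hj
  · have hij : i < j := Fin.lt_def.mpr (by omega)
    rw [(hl j hij).1, (hl' j hij).1, apply_eq_of_take_eq hv hi]

/-- Only the edges of `S(G,t)` at the last position survive in `S[G,t]`; all others are
contracted. -/
theorem exists_take_eq_of_gasket_adj {x y : Quotient (gasketSetoid G t)}
    (h : (gasket G t).Adj x y) :
    ∃ u v, ⟦u⟧ₛ = x ∧ ⟦v⟧ₛ = y ∧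
      Fin.take _ (Nat.sub_le t 1) u = Fin.take _ (Nat.sub_le t 1) v := by
  obtain ⟨hxy, u, v, rfl, rfl, i, hb, ha, hl⟩ := h
  have hi : t ≤ i.val + 1 := not_lt.mp fun hi =>
    hxy (mk_eq_mk_iff.mpr (Or.inr ⟨_, i, rfl, hi, hb, ha, hl⟩))
  exact ⟨u, v, rfl, rfl, funext fun j => hb _ (Fin.lt_def.mpr (show j.val < i.val by omega))⟩

/-- The words of length `t - 1` that prefix a representative of `x`, i.e. the copies of
`S[G,1] ≅ G` inside `S[G,t]` that contain `x`. -/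
def reprPrefixes (x : Quotient (gasketSetoid G t)) : Set (Fin (t - 1) → V) :=
  Fin.take _ (Nat.sub_le t 1) '' {u | ⟦u⟧ₛ = x}

theorem reprPrefixes_inter_nonempty_of_adj {x y : Quotient (gasketSetoid G t)}
    (h : (gasket G t).Adj x y) : (reprPrefixes x ∩ reprPrefixes y).Nonempty := by
  obtain ⟨u, v, hu, hv, huv⟩ := exists_take_eq_of_gasket_adj h
  exact ⟨_, ⟨u, hu, rfl⟩, ⟨v, hv, huv.symm⟩⟩

theorem reprPrefixes_eq_or_eq_or_eq (x : Quotient (gasketSetoid G t)) :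
    ∀ a ∈ reprPrefixes x, ∀ b ∈ reprPrefixes x, ∀ c ∈ reprPrefixes x, a = b ∨ a = c ∨ b = c := by
  rintro _ ⟨u, rfl, rfl⟩ _ ⟨v, hv, rfl⟩ _ ⟨w, hw, rfl⟩
  rcases eq_or_eq_or_eq_of_mk_eq hv.symm hw.symm with rfl | rfl | rfl <;> simp

theorem eq_of_mem_reprPrefixes {x y : Quotient (gasketSetoid G t)} {a b : Fin (t - 1) → V}
    (hab : a ≠ b) (hax : a ∈ reprPrefixes x) (hbx : b ∈ reprPrefixes x)
    (hay : a ∈ reprPrefixes y) (hby : b ∈ reprPrefixes y) : x = y := by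
  obtain ⟨u₁, rfl, rfl⟩ := hax
  obtain ⟨v₁, hv₁, rfl⟩ := hbx
  obtain ⟨u₂, rfl, hu⟩ := hay
  obtain ⟨v₂, hv₂, hv⟩ := hby
  have linking_of_mk_eq {u v : Fin t → V} (h : ⟦u⟧ₛ = ⟦v⟧ₛ)
      (hne : Fin.take _ (Nat.sub_le t 1) u ≠ Fin.take _ (Nat.sub_le t 1) v) : linking G t u v :=
    (mk_eq_mk_iff.mp h).resolve_left (by rintro rfl; exact hne rfl)
  rw [eq_of_linking_of_take_eq (linking_of_mk_eq hv₁.symm hab)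
    (linking_of_mk_eq hv₂.symm (hu ▸ hv ▸ hab)) hu.symm hv.symm]

end Gasket

/-- every clique of `S[G,t]` with at least `4` vertices lies entirely in
one of the copies `S_i[G,t]` of `S[G,t−1]`, i.e. all its vertices have representatives
whose first letter is `i`. -/
theorem stmt_10 (G : SimpleGraph V) (t : ℕ) (ht : 2 ≤ t)
    (C : Finset (Quotient (gasketSetoid G t)))
    (hC : (gasket G t).IsClique (C : Set (Quotient (gasketSetoid G t))))
    (hcard : 4 ≤ C.card) :
    ∃ i : V, ∀ x ∈ C, ∃ u : Fin t → V,
      Quotient.mk (gasketSetoid G t) u = x ∧ u ⟨0, by omega⟩ = i := by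
  obtain ⟨p, hp⟩ := exists_forall_mem_of_pairwise_inter_nonempty hcard
    (hC.mono' fun _ _ => reprPrefixes_inter_nonempty_of_adj)
    (fun x _ => reprPrefixes_eq_or_eq_or_eq x)
    (fun _ _ _ _ _ _ => eq_of_mem_reprPrefixes)
  refine ⟨p ⟨0, by omega⟩, fun x hx => ?_⟩
  obtain ⟨u, hu, rfl⟩ := hp x hx
  exact ⟨u, hu, rfl⟩
end

section
/- If T is a tree on n ≥ 2 vertices, then S[T,t] is a tree for every t ≥ 1, and hence χ(S[T,t]) = 2. -/
/-!
`S(G,t)` inherits connectivity and acyclicity from `G`: connectivity by induction on `t`, copy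
by copy; acyclicity by projecting a cycle onto the first position at which it changes a letter.
`S[G,t]` is the quotient of `S(G,t)` by the linking edges. Each class is connected by linking
edges, so walks of `S[G,t]` lift to `S(G,t)`, and every edge of `S[G,t]` is a bridge because its
lift is one. Finally a tree with an edge has chromatic number `2`, and `S[T,t]` has the edge
`a^t — a^(t-1) b` for any edge `ab` of `T`, since `a^t` lies on no linking edge.
-/

variable {V : Type*}

namespace SimpleGraph

variable {W W' : Type*} {H : SimpleGraph W} {G' : SimpleGraph W'} {f : W → W'}

theorem Walk.exists_eq_append_cons_of_mem_edges {x y : W} (p : H.Walk x y) {e : Sym2 W}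
    (he : e ∈ p.edges) :
    ∃ (a b : W) (h : H.Adj a b) (q : H.Walk x a) (r : H.Walk b y),
      e = s(a, b) ∧ p = q.append (cons h r) := by
  induction p with
  | nil => simp at he
  | @cons x m y h p ih =>
    rw [edges_cons, List.mem_cons] at he
    by_cases hhead : e = s(x, m)
    · exact ⟨x, m, h, nil, p, hhead, rfl⟩
    · obtain ⟨a, b, hab, q, r, rfl, rfl⟩ := ih (he.resolve_left hhead)
      exact ⟨a, b, hab, cons h q, r, rfl, rfl⟩

theorem IsAcyclic.count_edges_ne_one [DecidableEq W] (hH : H.IsAcyclic) {x : W}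
    (p : H.Walk x x) (e : Sym2 W) : p.edges.count e ≠ 1 := by
  intro hcount
  obtain ⟨a, b, hab, q, r, rfl, rfl⟩ :=
    p.exists_eq_append_cons_of_mem_edges (List.count_pos_iff.mp (by omega : 0 < p.edges.count e))
  rw [Walk.edges_append, Walk.edges_cons, List.count_append, List.count_cons_self] at hcount
  -- `r.append q` goes back from `b` to `a` without crossing the bridge `ab`
  have hbridge := isBridge_iff_forall_walk_mem_edges.mp
    (isAcyclic_iff_forall_adj_isBridge.mp hH hab.symm) (r.append q)
  rw [Sym2.eq_swap, Walk.edges_append, List.mem_append] at hbridge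
  rcases hbridge with h | h <;> have := List.count_pos_iff.mpr h <;> omega

theorem Walk.apply_eq_of_mem_support {X : Type*} {φ : W → X} {u v : W} (p : H.Walk u v)
    (hp : ∀ d ∈ p.darts, φ d.fst = φ d.snd) {z : W} (hz : z ∈ p.support) : φ z = φ u := by
  induction p with
  | nil => rw [support_nil, List.mem_singleton] at hz; rw [hz]
  | @cons x w y h q ih =>
    rw [darts_cons] at hp
    rw [support_cons, List.mem_cons] at hz
    rcases hz with rfl | hz
    · rfl
    · rw [ih (fun d hd => hp d (List.mem_cons_of_mem _ hd)) hz]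
      exact (hp _ List.mem_cons_self).symm

theorem Preconnected.of_surjective_of_adj (hH : H.Preconnected) (hsurj : f.Surjective)
    (hf : ∀ ⦃u v⦄, H.Adj u v → f u = f v ∨ G'.Adj (f u) (f v)) : G'.Preconnected := by
  intro x y
  obtain ⟨u, rfl⟩ := hsurj x
  obtain ⟨v, rfl⟩ := hsurj y
  obtain ⟨p⟩ := hH u v
  induction p with
  | nil => rfl
  | cons h _ ih =>
    rcases hf h with heq | hadj
    · rwa [heq]
    · exact hadj.reachable.trans ih

theorem Walk.exists_lift
    (hlift : ∀ ⦃x y⦄, G'.Adj x y → ∃ u v, f u = x ∧ f v = y ∧ H.Adj u v)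
    (hfiber : ∀ ⦃u v⦄, f u = f v → ∃ q : H.Walk u v, ∀ e ∈ q.edges, (e.map f).IsDiag)
    {x y : W'} (p : G'.Walk x y) {u v : W} (hu : f u = x) (hv : f v = y) :
    ∃ q : H.Walk u v, ∀ e ∈ q.edges, (e.map f).IsDiag ∨ e.map f ∈ p.edges := by
  induction p generalizing u with
  | nil =>
    obtain ⟨q, hq⟩ := hfiber (hu.trans hv.symm)
    exact ⟨q, fun e he => Or.inl (hq e he)⟩
  | cons h p ih =>
    obtain ⟨u₁, v₁, rfl, rfl, h₁⟩ := hlift h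
    obtain ⟨q₀, hq₀⟩ := hfiber hu
    obtain ⟨q₁, hq₁⟩ := ih rfl hv
    refine ⟨q₀.append (cons h₁ q₁), fun e he => ?_⟩
    simp only [Walk.edges_append, Walk.edges_cons, List.mem_append, List.mem_cons] at he
    rcases he with he | rfl | he
    · exact Or.inl (hq₀ e he)
    · exact Or.inr (by simp)
    · exact (hq₁ e he).imp_right (List.mem_cons_of_mem _)

theorem IsAcyclic.of_lift (hH : H.IsAcyclic)
    (hlift : ∀ ⦃x y⦄, G'.Adj x y → ∃ u v, f u = x ∧ f v = y ∧ H.Adj u v)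
    (hfiber : ∀ ⦃u v⦄, f u = f v → ∃ q : H.Walk u v, ∀ e ∈ q.edges, (e.map f).IsDiag) :
    G'.IsAcyclic := by
  refine isAcyclic_iff_forall_adj_isBridge.mpr fun x y hxy => ?_
  refine isBridge_iff_forall_walk_mem_edges.mpr fun p => ?_
  obtain ⟨u, v, rfl, rfl, huv⟩ := hlift hxy
  obtain ⟨q, hq⟩ := p.exists_lift hlift hfiber rfl rfl
  have huvq :=
    isBridge_iff_forall_walk_mem_edges.mp (isAcyclic_iff_forall_adj_isBridge.mp hH huv) q
  simpa [hxy.ne] using hq _ huvq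

theorem exists_walk_of_eqvGen {r : W → W → Prop} (hr : ∀ ⦃u v⦄, r u v → H.Adj u v)
    (hf : ∀ ⦃u v⦄, r u v → f u = f v) {u v : W} (h : Relation.EqvGen r u v) :
    ∃ q : H.Walk u v, ∀ e ∈ q.edges, (e.map f).IsDiag := by
  induction h with
  | rel u v huv => exact ⟨(hr huv).toWalk, by simp [hf huv]⟩
  | refl u => exact ⟨Walk.nil, by simp⟩
  | symm u v _ ih =>
    obtain ⟨q, hq⟩ := ih
    exact ⟨q.reverse, by simpa using hq⟩
  | trans u v w _ _ ih₁ ih₂ =>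
    obtain ⟨q₁, hq₁⟩ := ih₁
    obtain ⟨q₂, hq₂⟩ := ih₂
    refine ⟨q₁.append q₂, fun e he => ?_⟩
    rw [Walk.edges_append, List.mem_append] at he
    exact he.elim (hq₁ e) (hq₂ e)

end SimpleGraph

theorem Relation.EqvGen.eq_iff_eq_of_isolated {α : Type*} {r : α → α → Prop} {c : α}
    (hc : ∀ a, ¬ r c a ∧ ¬ r a c) {a b : α} (h : Relation.EqvGen r a b) : a = c ↔ b = c := by
  induction h with
  | rel a b hab =>
    constructor <;> rintro rfl
    exacts [absurd hab (hc b).1, absurd hab (hc a).2]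
  | refl => rfl
  | symm _ _ _ ih => exact ih.symm
  | trans _ _ _ _ _ ih₁ ih₂ => exact ih₁.trans ih₂

open SimpleGraph

section Sierpinski

variable {G : SimpleGraph V} {t : ℕ}

theorem sierAdj.apply_eq_or_adj {u v : Fin t → V} (h : sierAdj G t u v) (m : Fin t) :
    u m = v m ∨ G.Adj (u m) (v m) := by
  obtain ⟨i, hpre, hi, hsuf⟩ := h
  rcases lt_trichotomy m i with hm | rfl | hm
  · exact Or.inl (hpre m hm)
  · exact Or.inr hi
  · rw [(hsuf m hm).1, (hsuf m hm).2]
    exact Or.inr hi.symm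

theorem sierAdj.suffix_of_prefix {u v : Fin t → V} (h : sierAdj G t u v) {i : Fin t}
    (hpre : ∀ j < i, u j = v j) (hne : u i ≠ v i) : ∀ j, i < j → u j = v i ∧ v j = u i := by
  obtain ⟨i', hpre', hi', hsuf'⟩ := h
  rcases lt_trichotomy i i' with hlt | rfl | hlt
  · exact absurd (hpre' i hlt) hne
  · exact hsuf'
  · exact absurd (hpre i' hlt) hi'.ne

theorem sierAdj.eq_of_prefix {u v u' v' : Fin t → V} (h : sierAdj G t u v)
    (h' : sierAdj G t u' v') {i : Fin t} (hpre : ∀ j < i, u j = v j ∧ u' j = v' j ∧ u j = u' j)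
    (hu : u i = u' i) (hv : v i = v' i) (hne : u i ≠ v i) : u = u' ∧ v = v' := by
  have hsuf := h.suffix_of_prefix (fun j hj => (hpre j hj).1) hne
  have hsuf' := h'.suffix_of_prefix (fun j hj => (hpre j hj).2.1) (hu ▸ hv ▸ hne)
  constructor <;> funext j <;> rcases lt_trichotomy j i with hj | rfl | hj
  · exact (hpre j hj).2.2
  · exact hu
  · rw [(hsuf j hj).1, (hsuf' j hj).1, hv]
  · rw [← (hpre j hj).1, (hpre j hj).2.2, (hpre j hj).2.1]
  · exact hv
  · rw [(hsuf j hj).2, (hsuf' j hj).2, hu]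

theorem sierAdj.cons {u v : Fin t → V} (h : sierAdj G t u v) (a : V) :
    sierAdj G (t + 1) (Fin.cons a u) (Fin.cons a v) := by
  obtain ⟨i, hpre, hi, hsuf⟩ := h
  refine ⟨i.succ, Fin.cases (fun _ => rfl) fun j hj => ?_, by simpa using hi,
    Fin.cases (fun h => absurd h (Fin.succ_pos i).not_gt) fun j hj => ?_⟩
  · simpa using hpre j (Fin.succ_lt_succ_iff.mp hj)
  · simpa using hsuf j (Fin.succ_lt_succ_iff.mp hj)

theorem sierAdj_cons_const {a b : V} (h : G.Adj a b) :
    sierAdj G (t + 1) (Fin.cons a fun _ => b) (Fin.cons b fun _ => a) :=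
  ⟨0, fun j hj => absurd hj (Fin.not_lt_zero j), by simpa using h,
    Fin.cases (fun h => absurd h (lt_irrefl 0)) fun j _ => by simp⟩

/-- `S(G,t+1)` consists of the copies `a · S(G,t)`, and for every edge `ab` of `G` the copies
`a` and `b` are joined by the edge `a b^t — b a^t`. -/
theorem sier_preconnected (hG : G.Preconnected) (t : ℕ) : (sier G t).Preconnected := by
  induction t with
  | zero => intro u v; rw [Subsingleton.elim u v]
  | succ t ih =>
    have hcopy (a : V) {u v : Fin t → V} :
        (sier G (t + 1)).Reachable (Fin.cons a u) (Fin.cons a v) :=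
      let φ : sier G t →g sier G (t + 1) := ⟨fun w => Fin.cons a w, fun h => sierAdj.cons h a⟩
      (ih u v).map φ
    have hcross (a b : V) (u v : Fin t → V) :
        (sier G (t + 1)).Reachable (Fin.cons a u) (Fin.cons b v) := by
      obtain ⟨p⟩ := hG a b
      induction p generalizing u with
      | nil => exact hcopy _
      | cons hac p ihp =>
        have hbridge : (sier G (t + 1)).Adj (Fin.cons _ fun _ => _) (Fin.cons _ fun _ => _) :=
          sierAdj_cons_const hac
        exact ((hcopy _).trans hbridge.reachable).trans (ihp _)
    intro x y
    rw [← Fin.cons_self_tail x, ← Fin.cons_self_tail y]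
    exact hcross _ _ _ _

section Projection

variable [DecidableEq V]

def sierProj (m : Fin t) : ∀ {u v : Fin t → V}, (sier G t).Walk u v → G.Walk (u m) (v m)
  | _, _, .nil => .nil
  | u, _, .cons (v := w) h p =>
    if he : u m = w m then (sierProj m p).copy he.symm rfl
    else .cons ((sierAdj.apply_eq_or_adj h m).resolve_left he) (sierProj m p)

theorem edges_sierProj (m : Fin t) {u v : Fin t → V} (p : (sier G t).Walk u v) :
    (sierProj m p).edges = (p.edges.map (Sym2.map (· m))).filter (fun e => decide ¬ e.IsDiag) := by
  induction p with
  | nil => rfl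
  | @cons x w y h p ih =>
    by_cases he : x m = w m <;> simp [sierProj, he, ih]

end Projection

/-- Along a cycle, let `i` be the first position at which some edge changes the letter, and
`ab` the letters it swaps there. All vertices of the cycle share the prefix before `i`, so this
is the only edge of the cycle projecting onto `ab` at position `i`; the projection is then a
closed walk of `G` through `ab` exactly once. -/
theorem sier_isAcyclic (hG : G.IsAcyclic) (t : ℕ) : (sier G t).IsAcyclic := by
  classical
  intro x c hc
  obtain ⟨d₁, hd₁⟩ := List.exists_mem_of_ne_nil c.darts (by simpa using hc.not_nil)
  obtain ⟨i₁, -, hi₁, -⟩ := (d₁.adj : sierAdj G t _ _)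
  obtain ⟨i, ⟨d₀, hd₀, hne⟩, hmin⟩ := wellFounded_lt.has_min
    {i : Fin t | ∃ d ∈ c.darts, d.fst i ≠ d.snd i} ⟨i₁, d₁, hd₁, hi₁.ne⟩
  have hprefix : ∀ z ∈ c.support, ∀ j < i, z j = x j := fun z hz j hj =>
    c.apply_eq_of_mem_support (φ := (· j))
      (fun d hd => not_not.mp fun h => hmin j ⟨d, hd, h⟩ hj) hz
  have hunique : ∀ e ∈ c.edges, e.map (· i) = s(d₀.fst i, d₀.snd i) → e = d₀.edge := by
    intro e he hei
    obtain ⟨d, hd, rfl⟩ := List.mem_map.mp he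
    have hpre : ∀ {w w'}, w ∈ c.support → w' ∈ c.support → ∀ j < i, w j = w' j :=
      fun hw hw' j hj => (hprefix _ hw j hj).trans (hprefix _ hw' j hj).symm
    have hfst := c.dart_fst_mem_support_of_mem_darts hd
    have hsnd := c.dart_snd_mem_support_of_mem_darts hd
    have hfst₀ := c.dart_fst_mem_support_of_mem_darts hd₀
    have hsnd₀ := c.dart_snd_mem_support_of_mem_darts hd₀
    simp only [Dart.edge, Sym2.map_mk, Sym2.eq_iff] at hei ⊢
    rcases hei with ⟨h₁, h₂⟩ | ⟨h₁, h₂⟩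
    · exact Or.inl (sierAdj.eq_of_prefix d.adj d₀.adj
        (fun j hj => ⟨hpre hfst hsnd j hj, hpre hfst₀ hsnd₀ j hj, hpre hfst hfst₀ j hj⟩)
        h₁ h₂ (h₁ ▸ h₂ ▸ hne))
    · exact Or.inr (sierAdj.eq_of_prefix d.adj d₀.adj.symm
        (fun j hj => ⟨hpre hfst hsnd j hj, hpre hsnd₀ hfst₀ j hj, hpre hfst hsnd₀ j hj⟩)
        h₁ h₂ (h₁ ▸ h₂ ▸ hne.symm))
  refine hG.count_edges_ne_one (sierProj i c) s(d₀.fst i, d₀.snd i) ?_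
  rw [edges_sierProj, List.count_filter (by simpa using hne), List.count_eq_countP,
    List.countP_map, ← hc.isTrail.count_edges_eq_one (List.mem_map_of_mem hd₀),
    List.count_eq_countP]
  refine List.countP_congr fun e he => ?_
  simp only [Function.comp_apply, beq_iff_eq]
  exact ⟨hunique e he, fun h => by simp [h, Dart.edge]⟩

end Sierpinski

section Gasket

variable {G : SimpleGraph V} {t : ℕ}

theorem gasket_preconnected (h : (sier G t).Preconnected) : (gasket G t).Preconnected :=
  h.of_surjective_of_adj Quotient.mk_surjective fun u v huv =>
    or_iff_not_imp_left.mpr fun hne => ⟨hne, u, v, rfl, rfl, huv⟩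

theorem gasket_isAcyclic (h : (sier G t).IsAcyclic) : (gasket G t).IsAcyclic :=
  h.of_lift (fun _ _ ⟨_, u, v, hu, hv, huv⟩ => ⟨u, v, hu, hv, huv⟩) fun _ _ huv =>
    exists_walk_of_eqvGen (fun _ _ ⟨_, _, _, _, hpre, hadj, hsuf⟩ => ⟨_, hpre, hadj, hsuf⟩)
      (fun _ _ hl => Quotient.sound (Relation.EqvGen.rel _ _ hl)) (Quotient.exact huv)

theorem not_linking_const (a : V) (v : Fin t → V) :
    ¬ linking G t (fun _ => a) v ∧ ¬ linking G t v (fun _ => a) := by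
  constructor <;> rintro ⟨_, i, -, hi, -, hadj, hsuf⟩
  · exact hadj.ne (hsuf ⟨i + 1, hi⟩ (Fin.lt_def.mpr (Nat.lt_succ_self i))).1
  · exact hadj.ne (hsuf ⟨i + 1, hi⟩ (Fin.lt_def.mpr (Nat.lt_succ_self i))).2.symm

/-- `a^t` lies on no linking edge, so its class in `S[G,t]` is a singleton. -/
theorem gasket_adj_mk_const {a b : V} (hab : G.Adj a b) (i : Fin t) (hi : i.val + 1 = t) :
    (gasket G t).Adj (Quotient.mk _ fun _ => a)
      (Quotient.mk _ (Function.update (fun _ => a) i b)) := by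
  have hsier : sierAdj G t (fun _ => a) (Function.update (fun _ => a) i b) :=
    ⟨i, fun j hj => (Function.update_of_ne hj.ne b fun _ => a).symm, by simpa using hab,
      fun j hj => absurd j.isLt (by rw [Fin.lt_def] at hj; omega)⟩
  refine ⟨fun heq => hab.ne ?_, _, _, rfl, rfl, hsier⟩
  have hconst := ((Quotient.exact heq).eq_iff_eq_of_isolated (not_linking_const a)).mp rfl
  simpa using (congrFun hconst i).symm

end Gasket

/-- if `T` is a tree on `n ≥ 2` vertices then `S[T,t]` is a tree for every
`t ≥ 1`, and hence `χ(S[T,t]) = 2`. -/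
theorem stmt_13 [Fintype V] (T : SimpleGraph V) (hT : T.IsTree)
    (hn : 2 ≤ Fintype.card V) (t : ℕ) (ht : 1 ≤ t) :
    (gasket T t).IsTree ∧ (gasket T t).chromaticNumber = 2 := by
  have : Nontrivial V := Fintype.one_lt_card_iff_nontrivial.mp hn
  obtain ⟨a⟩ := hT.connected.nonempty
  obtain ⟨b, hab⟩ := hT.connected.preconnected.exists_adj_of_nontrivial a
  have htree : (gasket T t).IsTree :=
    ⟨(connected_iff _).mpr ⟨gasket_preconnected (sier_preconnected hT.connected.preconnected t),
      ⟨Quotient.mk _ fun _ => a⟩⟩, gasket_isAcyclic (sier_isAcyclic hT.isAcyclic t)⟩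
  have hedge := gasket_adj_mk_const (t := t) hab ⟨t - 1, by omega⟩ (Nat.sub_add_cancel ht)
  exact ⟨htree, le_antisymm htree.chromaticNumber_le_two (two_le_chromaticNumber_of_adj hedge)⟩
end

section
/- If χ(G) = 2, then χ(S[G,t]) = 2 for every positive integer t; equivalently, if G is bipartite then S[G,t] is bipartite. -/
variable {V : Type*}

/-!
Colour a word `u` of `S(G,t)` by `c(u_{t-1}) + c(u_{t-2})` in `ZMod 2` (just `c(u_0)` when
`t = 1`), where `c` is a proper 2-colouring of `G`. A linking edge at position `i < t - 1`
interchanges `u_i` and `v_i` in every later position, so it leaves this sum unchanged and the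
colouring descends to `S[G,t]`. Every remaining edge of `S[G,t]` comes from words that differ
only in their last letter, by an edge of `G`, so there the colour changes. In particular the words `a…a` and `a…ab`, for an edge `ab`
of `G`, stay distinct and adjacent in `S[G,t]`.
-/

open SimpleGraph

section

variable {G : SimpleGraph V}

def lastTwoColor (c : V → ZMod 2) : {t : ℕ} → (Fin t → V) → ZMod 2
  | 0, _ => 0
  | 1, u => c (u 0)
  | n + 2, u => c (u (Fin.last (n + 1))) + c (u (Fin.last n).castSucc)

lemma lastTwoColor_eq_of_linking (c : V → ZMod 2) {t : ℕ} {u v : Fin t → V}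
    (h : linking G t u v) : lastTwoColor c u = lastTwoColor c v := by
  obtain ⟨-, i, -, hit, -, -, hswap⟩ := h
  obtain ⟨n, rfl⟩ : ∃ n, t = n + 2 := ⟨t - 2, by omega⟩
  have hlast := hswap (Fin.last (n + 1)) (Fin.lt_def.mpr (by simp; omega))
  simp only [lastTwoColor, hlast.1, hlast.2]
  rcases Nat.lt_or_ge i.val n with hi | hi
  · have hprev := hswap (Fin.last n).castSucc (Fin.lt_def.mpr (by simpa))
    rw [hprev.1, hprev.2, CharTwo.add_self_eq_zero, CharTwo.add_self_eq_zero]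
  · rw [show (Fin.last n).castSucc = i from Fin.ext (by simp; omega), add_comm]

lemma lastTwoColor_ne_of_adj_last (c : G.Coloring (ZMod 2)) {n : ℕ} {u v : Fin (n + 1) → V}
    (hpre : ∀ j, j < Fin.last n → u j = v j) (hadj : G.Adj (u (Fin.last n)) (v (Fin.last n))) :
    lastTwoColor c u ≠ lastTwoColor c v := by
  cases n with
  | zero => exact c.valid hadj
  | succ n =>
    simp only [lastTwoColor, hpre _ (Fin.castSucc_lt_last _), ne_eq, add_left_inj]
    exact c.valid hadj

def gasketColor (G : SimpleGraph V) (c : V → ZMod 2) (t : ℕ) :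
    Quotient (gasketSetoid G t) → ZMod 2 :=
  Quotient.lift (lastTwoColor c) fun _ _ h =>
    Setoid.eqvGen_le (s := Setoid.ker (lastTwoColor c))
      (fun _ _ => lastTwoColor_eq_of_linking c) h

lemma exists_adj_last_of_gasket_adj {n : ℕ} {x y : Quotient (gasketSetoid G (n + 1))}
    (h : (gasket G (n + 1)).Adj x y) :
    ∃ u v, ⟦u⟧ = x ∧ ⟦v⟧ = y ∧ (∀ j, j < Fin.last n → u j = v j) ∧
      G.Adj (u (Fin.last n)) (v (Fin.last n)) := by
  obtain ⟨hxy, u, v, rfl, rfl, i, hpre, hadj, hswap⟩ := h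
  obtain rfl | hi := (Fin.le_last i).eq_or_lt
  · exact ⟨u, v, rfl, rfl, hpre, hadj⟩
  · exact absurd (Quotient.sound (Relation.EqvGen.rel _ _
      ⟨i, i, rfl, by simpa [Fin.lt_def] using hi, hpre, hadj, hswap⟩)) hxy

def gasketColoring (c : G.Coloring (ZMod 2)) (n : ℕ) : (gasket G (n + 1)).Coloring (ZMod 2) :=
  Coloring.mk (gasketColor G c (n + 1)) fun h => by
    obtain ⟨u, v, rfl, rfl, hpre, hadj⟩ := exists_adj_last_of_gasket_adj h
    exact lastTwoColor_ne_of_adj_last c hpre hadj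

lemma gasket_adj_of_adj (c : G.Coloring (ZMod 2)) (n : ℕ) {a b : V} (hab : G.Adj a b) :
    (gasket G (n + 1)).Adj ⟦fun _ => a⟧ ⟦Function.update (fun _ => a) (Fin.last n) b⟧ := by
  have hpre : ∀ j, j < Fin.last n →
      (fun _ => a) j = Function.update (fun _ => a) (Fin.last n) b j :=
    fun j hj => (Function.update_of_ne hj.ne b fun _ => a).symm
  have hadj : G.Adj a (Function.update (fun _ => a) (Fin.last n) b (Fin.last n)) := by
    simpa using hab
  refine ⟨fun h => ?_, _, _, rfl, rfl, Fin.last n, hpre, hadj, fun j hj => ?_⟩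
  · exact lastTwoColor_ne_of_adj_last c hpre hadj (congrArg (gasketColor G c (n + 1)) h)
  · exact absurd hj (Fin.le_last j).not_gt

end

/-- if `χ(G) = 2` then `χ(S[G,t]) = 2` for every positive integer `t`. -/
theorem stmt_17 (G : SimpleGraph V) (hG : G.chromaticNumber = 2) (t : ℕ) (ht : 1 ≤ t) :
    (gasket G t).chromaticNumber = 2 := by
  obtain ⟨n, rfl⟩ : ∃ n, t = n + 1 := ⟨t - 1, by omega⟩
  obtain ⟨a, b, hab⟩ := ne_bot_iff_exists_adj.mp (two_le_chromaticNumber_iff_ne_bot.mp hG.ge)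
  obtain ⟨c⟩ : G.Colorable 2 := chromaticNumber_le_iff_colorable.mp hG.le
  refine le_antisymm ?_ (two_le_chromaticNumber_of_adj (gasket_adj_of_adj c n hab))
  exact (gasketColoring c n).colorable.chromaticNumber_le
end
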